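/- Let rings A and B be symmetric separably equivalent with context (P, Q, ν, μ). Then the map P ⊗_B Q → End(P_B) sending p ⊗ q to the endomorphism p' ↦ p·μ(q ⊗ p') is a ring isomorphism from P ⊗_B Q equipped with the μ-multiplication (with identity Σⱼ pⱼ ⊗ qⱼ) onto the endomorphism ring End(P_B); its inverse sends α ∈ End(P_B) to Σⱼ α(pⱼ) ⊗ qⱼ. -/

import Mathlib

/-! ### A balanced tensor product of a right module and a left module
over a possibly noncommutative ring, constructed as a quotient of the
`ℤ`-tensor product. -/

open MulOpposite
open scoped TensorProduct

section BalCore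

variable (R : Type*) [Ring R] (M : Type*) [AddCommGroup M] [Module Rᵐᵒᵖ M]
  (N : Type*) [AddCommGroup N] [Module R N]

/-- The subgroup of relations defining the balanced tensor product. -/
def balRel : Submodule ℤ (TensorProduct ℤ M N) :=
  Submodule.span ℤ {x | ∃ (m : M) (r : R) (n : N), x = (op r • m) ⊗ₜ[ℤ] n - m ⊗ₜ[ℤ] (r • n)}

/-- The balanced tensor product `M ⊗[R] N` of a right `R`-module `M` and a
left `R`-module `N`. -/
def Bal : Type _ := TensorProduct ℤ M N ⧸ balRel R M N

noncomputable instance : AddCommGroup (Bal R M N) := Submodule.Quotient.addCommGroup _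

variable {M N}

/-- The canonical image of `m ⊗ n` in the balanced tensor product. -/
noncomputable def Bal.tmul (m : M) (n : N) : Bal R M N := Submodule.Quotient.mk (m ⊗ₜ[ℤ] n)

theorem Bal.add_tmul (m m' : M) (n : N) :
    Bal.tmul R (m + m') n = Bal.tmul R m n + Bal.tmul R m' n := by
  show Submodule.Quotient.mk _ = _
  rw [TensorProduct.add_tmul]
  rfl

theorem Bal.tmul_add (m : M) (n n' : N) :
    Bal.tmul R m (n + n') = Bal.tmul R m n + Bal.tmul R m n' := by
  show Submodule.Quotient.mk _ = _
  rw [TensorProduct.tmul_add]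
  rfl

theorem Bal.zero_tmul (n : N) : Bal.tmul R (0 : M) n = 0 := by
  show Submodule.Quotient.mk _ = _
  rw [TensorProduct.zero_tmul]
  rfl

theorem Bal.tmul_zero (m : M) : Bal.tmul R m (0 : N) = 0 := by
  show Submodule.Quotient.mk _ = _
  rw [TensorProduct.tmul_zero]
  rfl

/-- The fundamental balancing relation `(m · r) ⊗ n = m ⊗ (r · n)`. -/
theorem Bal.op_smul_tmul (m : M) (r : R) (n : N) :
    Bal.tmul R (op r • m) n = Bal.tmul R m (r • n) :=
  (Submodule.Quotient.eq _).2 (Submodule.subset_span ⟨m, r, n, rfl⟩)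

theorem Bal.induction_on {C : Bal R M N → Prop} (x : Bal R M N) (zero : C 0)
    (tmul : ∀ m n, C (Bal.tmul R m n)) (add : ∀ x y, C x → C y → C (x + y)) : C x := by
  obtain ⟨y, rfl⟩ := Submodule.Quotient.mk_surjective _ x
  induction y using TensorProduct.induction_on with
  | zero => exact zero
  | tmul m n => exact tmul m n
  | add a b ha hb =>
      have : (Submodule.Quotient.mk (a + b) : Bal R M N)
          = Submodule.Quotient.mk a + Submodule.Quotient.mk b := rfl
      rw [this]; exact add _ _ ha hb

/-- Lift a balanced biadditive map to the balanced tensor product. -/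
noncomputable def Bal.liftFun {T : Type*} [AddCommGroup T] (f : M → N → T)
    (h1 : ∀ m m' n, f (m + m') n = f m n + f m' n)
    (h2 : ∀ m n n', f m (n + n') = f m n + f m n')
    (h3 : ∀ (m : M) (r : R) (n : N), f (op r • m) n = f m (r • n)) : Bal R M N →+ T :=
  letI f₂ : M →+ N →+ T :=
    AddMonoidHom.mk' (fun m => AddMonoidHom.mk' (f m) (h2 m))
      (fun m m' => AddMonoidHom.ext fun n => h1 m m' n)
  letI bil : M →ₗ[ℤ] N →ₗ[ℤ] T :=
    { toFun := fun m => (f₂ m).toIntLinearMap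
      map_add' := fun m m' => LinearMap.ext fun n => by simp
      map_smul' := fun z m => LinearMap.ext fun n => by
        simp [map_zsmul] }
  ((balRel R M N).liftQ (TensorProduct.lift bil) (by
    rw [balRel, Submodule.span_le]
    rintro x ⟨m, r, n, rfl⟩
    simp only [SetLike.mem_coe, LinearMap.mem_ker, map_sub]
    change TensorProduct.lift bil _ = 0
    rw [map_sub, TensorProduct.lift.tmul, TensorProduct.lift.tmul]
    exact sub_eq_zero.2 (h3 m r n))).toAddMonoidHom

@[simp] theorem Bal.liftFun_tmul {T : Type*} [AddCommGroup T] (f : M → N → T)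
    (h1 : ∀ m m' n, f (m + m') n = f m n + f m' n)
    (h2 : ∀ m n n', f m (n + n') = f m n + f m n')
    (h3 : ∀ (m : M) (r : R) (n : N), f (op r • m) n = f m (r • n)) (m : M) (n : N) :
    Bal.liftFun R f h1 h2 h3 (Bal.tmul R m n) = f m n := by
  simp [Bal.liftFun, Bal.tmul, Submodule.Quotient.mk]
  rfl

theorem Bal.addHom_ext {T : Type*} [AddCommGroup T] {f g : Bal R M N →+ T}
    (h : ∀ m n, f (Bal.tmul R m n) = g (Bal.tmul R m n)) : f = g := by
  ext x
  refine Bal.induction_on R (C := fun z => f z = g z) x (by simp) h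
    (fun x y hx hy => by simp only [map_add]; rw [hx, hy])

end BalCore
section BalModule

variable (R : Type*) [Ring R] {M : Type*} [AddCommGroup M] [Module Rᵐᵒᵖ M]
  {N : Type*} [AddCommGroup N] [Module R N]

section Left

variable {S : Type*} [Ring S] [Module S M] [SMulCommClass S Rᵐᵒᵖ M]

/-- The left action on the balanced tensor product through the first factor. -/
noncomputable def Bal.lsmulHom (s : S) : Bal R M N →+ Bal R M N :=
  Bal.liftFun R (fun m n => Bal.tmul R (s • m) n)
    (fun m m' n => by
      show Bal.tmul R (s • (m + m')) n = Bal.tmul R (s • m) n + Bal.tmul R (s • m') n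
      rw [smul_add, Bal.add_tmul])
    (fun m n n' => Bal.tmul_add R _ n n')
    (fun m r n => by
      show Bal.tmul R (s • op r • m) n = Bal.tmul R (s • m) (r • n)
      rw [smul_comm, Bal.op_smul_tmul])

theorem Bal.lsmulHom_tmul (s : S) (m : M) (n : N) :
    Bal.lsmulHom R (M := M) (N := N) s (Bal.tmul R m n) = Bal.tmul R (s • m) n :=
  Bal.liftFun_tmul R _ _ _ _ m n

noncomputable instance : SMul S (Bal R M N) := ⟨fun s x => Bal.lsmulHom R s x⟩

theorem Bal.lsmul_tmul (s : S) (m : M) (n : N) :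
    s • Bal.tmul R m n = Bal.tmul R (s • m) n :=
  Bal.lsmulHom_tmul R s m n

theorem Bal.lsmul_one : Bal.lsmulHom R (M := M) (N := N) (1 : S) = AddMonoidHom.id _ :=
  Bal.addHom_ext R fun m n => by
    rw [Bal.lsmulHom_tmul, one_smul, AddMonoidHom.id_apply]

theorem Bal.lsmul_mul (s t : S) :
    Bal.lsmulHom R (M := M) (N := N) (s * t) = (Bal.lsmulHom R s).comp (Bal.lsmulHom R t) :=
  Bal.addHom_ext R fun m n => by
    rw [AddMonoidHom.comp_apply, Bal.lsmulHom_tmul, Bal.lsmulHom_tmul, Bal.lsmulHom_tmul,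
      mul_smul]

theorem Bal.lsmul_addsmul (s t : S) :
    Bal.lsmulHom R (M := M) (N := N) (s + t) = Bal.lsmulHom R s + Bal.lsmulHom R t :=
  Bal.addHom_ext R fun m n => by
    rw [AddMonoidHom.add_apply, Bal.lsmulHom_tmul, Bal.lsmulHom_tmul, Bal.lsmulHom_tmul,
      add_smul, Bal.add_tmul]

theorem Bal.lsmul_zerosmul : Bal.lsmulHom R (M := M) (N := N) (0 : S) = 0 :=
  Bal.addHom_ext R fun m n => by
    rw [Bal.lsmulHom_tmul, zero_smul, Bal.zero_tmul, AddMonoidHom.zero_apply]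

noncomputable instance : Module S (Bal R M N) where
  one_smul x := DFunLike.congr_fun (Bal.lsmul_one R (M := M) (N := N) (S := S)) x
  mul_smul s t x := DFunLike.congr_fun (Bal.lsmul_mul R s t) x
  smul_zero s := (Bal.lsmulHom R (M := M) (N := N) s).map_zero
  smul_add s x y := (Bal.lsmulHom R s).map_add x y
  add_smul s t x := DFunLike.congr_fun (Bal.lsmul_addsmul R s t) x
  zero_smul x := DFunLike.congr_fun (Bal.lsmul_zerosmul R (M := M) (N := N) (S := S)) x

end Left

section Right

variable {S : Type*} [Ring S] [Module Sᵐᵒᵖ N] [SMulCommClass R Sᵐᵒᵖ N]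

/-- The right action on the balanced tensor product through the second factor. -/
noncomputable def Bal.rsmulHom (s : Sᵐᵒᵖ) : Bal R M N →+ Bal R M N :=
  Bal.liftFun R (fun m n => Bal.tmul R m (s • n))
    (fun m m' n => Bal.add_tmul R m m' _)
    (fun m n n' => by
      show Bal.tmul R m (s • (n + n')) = Bal.tmul R m (s • n) + Bal.tmul R m (s • n')
      rw [smul_add, Bal.tmul_add])
    (fun m r n => by
      show Bal.tmul R (op r • m) (s • n) = Bal.tmul R m (s • r • n)
      rw [Bal.op_smul_tmul, smul_comm])

theorem Bal.rsmulHom_tmul (s : Sᵐᵒᵖ) (m : M) (n : N) :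
    Bal.rsmulHom R (M := M) (N := N) s (Bal.tmul R m n) = Bal.tmul R m (s • n) :=
  Bal.liftFun_tmul R _ _ _ _ m n

noncomputable instance : SMul Sᵐᵒᵖ (Bal R M N) := ⟨fun s x => Bal.rsmulHom R s x⟩

theorem Bal.rsmul_tmul (s : Sᵐᵒᵖ) (m : M) (n : N) :
    s • Bal.tmul R m n = Bal.tmul R m (s • n) :=
  Bal.rsmulHom_tmul R s m n

theorem Bal.rsmul_one : Bal.rsmulHom R (M := M) (N := N) (1 : Sᵐᵒᵖ) = AddMonoidHom.id _ :=
  Bal.addHom_ext R fun m n => by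
    rw [Bal.rsmulHom_tmul, one_smul, AddMonoidHom.id_apply]

theorem Bal.rsmul_mul (s t : Sᵐᵒᵖ) :
    Bal.rsmulHom R (M := M) (N := N) (s * t) = (Bal.rsmulHom R s).comp (Bal.rsmulHom R t) :=
  Bal.addHom_ext R fun m n => by
    rw [AddMonoidHom.comp_apply, Bal.rsmulHom_tmul, Bal.rsmulHom_tmul, Bal.rsmulHom_tmul,
      mul_smul]

theorem Bal.rsmul_addsmul (s t : Sᵐᵒᵖ) :
    Bal.rsmulHom R (M := M) (N := N) (s + t) = Bal.rsmulHom R s + Bal.rsmulHom R t :=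
  Bal.addHom_ext R fun m n => by
    rw [AddMonoidHom.add_apply, Bal.rsmulHom_tmul, Bal.rsmulHom_tmul, Bal.rsmulHom_tmul,
      add_smul, Bal.tmul_add]

theorem Bal.rsmul_zerosmul : Bal.rsmulHom R (M := M) (N := N) (0 : Sᵐᵒᵖ) = 0 :=
  Bal.addHom_ext R fun m n => by
    rw [Bal.rsmulHom_tmul, zero_smul, Bal.tmul_zero, AddMonoidHom.zero_apply]

noncomputable instance : Module Sᵐᵒᵖ (Bal R M N) where
  one_smul x := DFunLike.congr_fun (Bal.rsmul_one R (M := M) (N := N) (S := S)) x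
  mul_smul s t x := DFunLike.congr_fun (Bal.rsmul_mul R s t) x
  smul_zero s := (Bal.rsmulHom R (M := M) (N := N) s).map_zero
  smul_add s x y := (Bal.rsmulHom R s).map_add x y
  add_smul s t x := DFunLike.congr_fun (Bal.rsmul_addsmul R s t) x
  zero_smul x := DFunLike.congr_fun (Bal.rsmul_zerosmul R (M := M) (N := N) (S := S)) x

end Right

end BalModule
section HomBimodule

variable {A B P Q : Type*} [Ring A] [Ring B]
  [AddCommGroup P] [Module A P] [Module Bᵐᵒᵖ P] [SMulCommClass A Bᵐᵒᵖ P]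
  [AddCommGroup Q] [Module B Q] [Module Aᵐᵒᵖ Q] [SMulCommClass B Aᵐᵒᵖ Q]

/-- Right multiplication by `b` as a left `A`-module endomorphism of `P`. -/
noncomputable def rmulLinear (b : B) : P →ₗ[A] P where
  toFun p := op b • p
  map_add' := smul_add (op b)
  map_smul' a p := (smul_comm a (op b) p).symm

/-- Left multiplication by `a` as a right `B`-module endomorphism of `P`. -/
noncomputable def lmulLinear (a : A) : P →ₗ[Bᵐᵒᵖ] P where
  toFun p := a • p
  map_add' := smul_add a
  map_smul' b p := smul_comm a b p

/-- The right `A`-action (through the domain) on `Hom_B(P_B, B_B)`: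
`(f · a) p = f (a • p)`. -/
noncomputable instance : Module Aᵐᵒᵖ (P →ₗ[Bᵐᵒᵖ] B) where
  smul a f := f.comp (lmulLinear a.unop)
  one_smul f := LinearMap.ext fun p => by
    show f ((1 : Aᵐᵒᵖ).unop • p) = f p
    rw [unop_one, one_smul]
  mul_smul a a' f := LinearMap.ext fun p => by
    show f ((a * a').unop • p) = f (a'.unop • a.unop • p)
    rw [MulOpposite.unop_mul, mul_smul]
  smul_zero a := LinearMap.ext fun p => rfl
  smul_add a f g := LinearMap.ext fun p => rfl
  add_smul a a' f := LinearMap.ext fun p => by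
    show f ((a + a').unop • p) = f (a.unop • p) + f (a'.unop • p)
    rw [MulOpposite.unop_add, add_smul, map_add]
  zero_smul f := LinearMap.ext fun p => by
    show f ((0 : Aᵐᵒᵖ).unop • p) = 0
    rw [MulOpposite.unop_zero, zero_smul, map_zero]

theorem opSmul_homBB_apply (a : A) (f : P →ₗ[Bᵐᵒᵖ] B) (p : P) :
    (op a • f) p = f (a • p) := rfl

/-- The left `B`-action (through the domain) on `Hom_A({}_A P, {}_A A)`:
`(b · f) p = f (p · b)`. -/
noncomputable instance : Module B (P →ₗ[A] A) where
  smul b f := f.comp (rmulLinear b)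
  one_smul f := LinearMap.ext fun p => by
    show f (op (1 : B) • p) = f p
    rw [op_one, one_smul]
  mul_smul b b' f := LinearMap.ext fun p => by
    show f (op (b * b') • p) = f (op b' • op b • p)
    rw [op_mul, mul_smul]
  smul_zero b := LinearMap.ext fun p => rfl
  smul_add b f g := LinearMap.ext fun p => rfl
  add_smul b b' f := LinearMap.ext fun p => by
    show f (op (b + b') • p) = f (op b • p) + f (op b' • p)
    rw [op_add, add_smul, map_add]
  zero_smul f := LinearMap.ext fun p => by
    show f (op (0 : B) • p) = 0
    rw [op_zero, zero_smul, map_zero]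

theorem smul_homAA_apply (b : B) (f : P →ₗ[A] A) (p : P) :
    (b • f) p = f (op b • p) := rfl

noncomputable instance : SMulCommClass B Aᵐᵒᵖ (P →ₗ[A] A) :=
  ⟨fun _ _ _ => LinearMap.ext fun _ => rfl⟩

noncomputable instance : SMulCommClass B Aᵐᵒᵖ (P →ₗ[Bᵐᵒᵖ] B) :=
  ⟨fun _ _ _ => LinearMap.ext fun _ => rfl⟩

/-- The map `Q → Hom_A({}_A P, {}_A A)`, `q ↦ ν(- ⊗ q)`. -/
noncomputable def nuDual (ν : Bal B P Q →+ A)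
    (hνl : ∀ (a : A) (x : Bal B P Q), ν (a • x) = a * ν x) (q : Q) : P →ₗ[A] A where
  toFun p := ν (Bal.tmul B p q)
  map_add' p p' := by
    show ν (Bal.tmul B (p + p') q) = ν (Bal.tmul B p q) + ν (Bal.tmul B p' q)
    rw [Bal.add_tmul, map_add]
  map_smul' a p := by
    show ν (Bal.tmul B (a • p) q) = a • ν (Bal.tmul B p q)
    rw [← Bal.lsmul_tmul, hνl, smul_eq_mul]

@[simp] theorem nuDual_apply (ν : Bal B P Q →+ A)
    (hνl : ∀ (a : A) (x : Bal B P Q), ν (a • x) = a * ν x) (q : Q) (p : P) :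
    nuDual ν hνl q p = ν (Bal.tmul B p q) := rfl

/-- The map `Q → Hom_B(P_B, B_B)`, `q ↦ μ(q ⊗ -)`. -/
noncomputable def muDual (μ : Bal A Q P →+ B)
    (hμr : ∀ (b : B) (y : Bal A Q P), μ (op b • y) = μ y * b) (q : Q) : P →ₗ[Bᵐᵒᵖ] B where
  toFun p := μ (Bal.tmul A q p)
  map_add' p p' := by
    show μ (Bal.tmul A q (p + p')) = μ (Bal.tmul A q p) + μ (Bal.tmul A q p')
    rw [Bal.tmul_add, map_add]
  map_smul' b p := by
    show μ (Bal.tmul A q (b • p)) = b • μ (Bal.tmul A q p)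
    rw [← Bal.rsmul_tmul, MulOpposite.smul_eq_mul_unop]
    conv_lhs => rw [← MulOpposite.op_unop b]
    rw [hμr]

@[simp] theorem muDual_apply (μ : Bal A Q P →+ B)
    (hμr : ∀ (b : B) (y : Bal A Q P), μ (op b • y) = μ y * b) (q : Q) (p : P) :
    muDual μ hμr q p = μ (Bal.tmul A q p) := rfl

end HomBimodule
section EndMap

variable {A B P Q : Type*} [Ring A] [Ring B]
  [AddCommGroup P] [Module A P] [Module Bᵐᵒᵖ P] [SMulCommClass A Bᵐᵒᵖ P]
  [AddCommGroup Q] [Module B Q] [Module Aᵐᵒᵖ Q] [SMulCommClass B Aᵐᵒᵖ Q]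

/-- The right `B`-linear endomorphism `p' ↦ p · μ(q ⊗ p')` of `P`. -/
noncomputable def endMapAux (μ : Bal A Q P →+ B)
    (hμr : ∀ (b : B) (y : Bal A Q P), μ (op b • y) = μ y * b)
    (p : P) (q : Q) : P →ₗ[Bᵐᵒᵖ] P where
  toFun p' := op (μ (Bal.tmul A q p')) • p
  map_add' p' p'' := by
    show op (μ (Bal.tmul A q (p' + p''))) • p
      = op (μ (Bal.tmul A q p')) • p + op (μ (Bal.tmul A q p'')) • p
    rw [Bal.tmul_add, map_add, MulOpposite.op_add, add_smul]
  map_smul' b p' := by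
    show op (μ (Bal.tmul A q (b • p'))) • p = b • op (μ (Bal.tmul A q p')) • p
    have h : Bal.tmul A q (b • p') = op b.unop • Bal.tmul A q p' := by
      rw [MulOpposite.op_unop]
      exact (Bal.rsmul_tmul A b q p').symm
    rw [h, hμr, MulOpposite.op_mul, MulOpposite.op_unop, mul_smul]

/-- The homomorphism `P ⊗[B] Q → End(P_B)`, `p ⊗ q ↦ (p' ↦ p · μ(q ⊗ p'))`. -/
noncomputable def endMap (μ : Bal A Q P →+ B)
    (hμl : ∀ (b : B) (y : Bal A Q P), μ (b • y) = b * μ y)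
    (hμr : ∀ (b : B) (y : Bal A Q P), μ (op b • y) = μ y * b) :
    Bal B P Q →+ Module.End Bᵐᵒᵖ P :=
  Bal.liftFun B (fun p q => endMapAux μ hμr p q)
    (fun p p' q => LinearMap.ext fun p'' => smul_add _ p p')
    (fun p q q' => LinearMap.ext fun p'' => by
      show op (μ (Bal.tmul A (q + q') p'')) • p
        = op (μ (Bal.tmul A q p'')) • p + op (μ (Bal.tmul A q' p'')) • p
      rw [Bal.add_tmul, map_add, MulOpposite.op_add, add_smul])
    (fun p b q => LinearMap.ext fun p'' => by
      show op (μ (Bal.tmul A q p'')) • op b • p = op (μ (Bal.tmul A (b • q) p'')) • p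
      rw [← Bal.lsmul_tmul, hμl, ← mul_smul, ← MulOpposite.op_mul])

@[simp] theorem endMap_tmul (μ : Bal A Q P →+ B)
    (hμl : ∀ (b : B) (y : Bal A Q P), μ (b • y) = b * μ y)
    (hμr : ∀ (b : B) (y : Bal A Q P), μ (op b • y) = μ y * b)
    (p : P) (q : Q) (p' : P) :
    endMap μ hμl hμr (Bal.tmul B p q) p' = op (μ (Bal.tmul A q p')) • p := by
  rw [endMap, Bal.liftFun_tmul]
  rfl

end EndMap

/-! The identities `Σⱼ μ(q ⊗ pⱼ) · qⱼ = q` and `Σⱼ pⱼ · μ(qⱼ ⊗ p) = p` say precisely that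
`α ↦ Σⱼ α(pⱼ) ⊗ qⱼ` is a left and a right inverse of `p ⊗ q ↦ p · μ(q ⊗ -)`. Multiplicativity
only has to be checked on pure tensors, where it is the right `B`-linearity of `μ`:
`p · μ(q ⊗ p' · μ(q'' ⊗ p₀)) = p · μ(q ⊗ p') · μ(q'' ⊗ p₀)`. -/

section BalLemmas

variable {R : Type*} [Ring R] {M : Type*} [AddCommGroup M] [Module Rᵐᵒᵖ M]
  {N : Type*} [AddCommGroup N] [Module R N]

theorem Bal.tmul_sum {ι : Type*} (s : Finset ι) (m : M) (f : ι → N) :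
    Bal.tmul R m (∑ i ∈ s, f i) = ∑ i ∈ s, Bal.tmul R m (f i) :=
  map_sum (AddMonoidHom.mk' (Bal.tmul R m) (Bal.tmul_add R m)) f s

theorem Bal.addHom_ext₂ {S : Type*} [Ring S] {M' : Type*} [AddCommGroup M'] [Module Sᵐᵒᵖ M']
    {N' : Type*} [AddCommGroup N'] [Module S N'] {T : Type*} [AddCommGroup T]
    {f g : Bal R M N →+ Bal S M' N' →+ T}
    (h : ∀ m n m' n',
      f (Bal.tmul R m n) (Bal.tmul S m' n') = g (Bal.tmul R m n) (Bal.tmul S m' n')) :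
    f = g :=
  Bal.addHom_ext R fun m n => Bal.addHom_ext S fun m' n' => h m n m' n'

end BalLemmas

section EndMapIso

variable {A B P Q : Type*} [Ring A] [Ring B]
  [AddCommGroup P] [Module A P] [Module Bᵐᵒᵖ P] [SMulCommClass A Bᵐᵒᵖ P]
  [AddCommGroup Q] [Module B Q] [Module Aᵐᵒᵖ Q] [SMulCommClass B Aᵐᵒᵖ Q]
  (μ : Bal A Q P →+ B)
  (hμl : ∀ (b : B) (y : Bal A Q P), μ (b • y) = b * μ y)
  (hμr : ∀ (b : B) (y : Bal A Q P), μ (op b • y) = μ y * b)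

theorem endMap_tmul_mul_endMap_tmul (p p' : P) (q q' : Q) :
    endMap μ hμl hμr (Bal.tmul B p q) * endMap μ hμl hμr (Bal.tmul B p' q')
      = endMap μ hμl hμr (Bal.tmul B (op (μ (Bal.tmul A q p')) • p) q') := by
  ext p₀
  rw [Module.End.mul_apply, endMap_tmul, endMap_tmul, endMap_tmul,
    ← Bal.rsmul_tmul A (op (μ (Bal.tmul A q' p₀))) q p', hμr, op_mul, mul_smul]

theorem endMap_mul (mul : Bal B P Q →+ Bal B P Q →+ Bal B P Q)
    (hmul : ∀ (p p' : P) (q q' : Q),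
      mul (Bal.tmul B p q) (Bal.tmul B p' q') = Bal.tmul B (op (μ (Bal.tmul A q p')) • p) q')
    (x y : Bal B P Q) :
    endMap μ hμl hμr (mul x y) = endMap μ hμl hμr x * endMap μ hμl hμr y := by
  have h : mul.compr₂ (endMap μ hμl hμr)
      = (AddMonoidHom.mul.comp (endMap μ hμl hμr)).compl₂ (endMap μ hμl hμr) :=
    Bal.addHom_ext₂ fun p q p' q' => by
      simp [hmul, endMap_tmul_mul_endMap_tmul]
  exact DFunLike.congr_fun (DFunLike.congr_fun h x) y

variable {ι : Type*} [Fintype ι] (pj : ι → P) (qj : ι → Q)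

noncomputable def endMapInv : Module.End Bᵐᵒᵖ P →+ Bal B P Q :=
  ∑ j, AddMonoidHom.mk' (fun α => Bal.tmul B (α (pj j)) (qj j)) fun _ _ => Bal.add_tmul B _ _ _

theorem endMapInv_apply (α : Module.End Bᵐᵒᵖ P) :
    endMapInv pj qj α = ∑ j, Bal.tmul B (α (pj j)) (qj j) := by
  simp only [endMapInv, AddMonoidHom.finsetSum_apply, AddMonoidHom.mk'_apply]

theorem endMap_endMapInv (hdual : ∀ p : P, ∑ j, op (μ (Bal.tmul A (qj j) p)) • pj j = p)
    (α : Module.End Bᵐᵒᵖ P) :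
    endMap μ hμl hμr (endMapInv pj qj α) = α := by
  ext p₀
  calc endMap μ hμl hμr (endMapInv pj qj α) p₀
      = ∑ j, op (μ (Bal.tmul A (qj j) p₀)) • α (pj j) := by
        simp only [endMapInv_apply, map_sum, LinearMap.coe_sum, Finset.sum_apply, endMap_tmul]
    _ = α p₀ := by
        simp_rw [← α.map_smul, ← map_sum, hdual]

theorem endMapInv_endMap (hdual : ∀ q : Q, ∑ j, μ (Bal.tmul A q (pj j)) • qj j = q)
    (x : Bal B P Q) :
    endMapInv pj qj (endMap μ hμl hμr x) = x := by
  suffices (endMapInv pj qj).comp (endMap μ hμl hμr) = AddMonoidHom.id _ from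
    DFunLike.congr_fun this x
  refine Bal.addHom_ext B fun p q => ?_
  rw [AddMonoidHom.comp_apply, endMapInv_apply, AddMonoidHom.id_apply]
  calc ∑ j, Bal.tmul B (endMap μ hμl hμr (Bal.tmul B p q) (pj j)) (qj j)
      = ∑ j, Bal.tmul B p (μ (Bal.tmul A q (pj j)) • qj j) := by
        simp only [endMap_tmul, Bal.op_smul_tmul]
    _ = Bal.tmul B p q := by rw [← Bal.tmul_sum, hdual]

end EndMapIso

theorem endMap_ring_isomorphism_general
    {A B P Q : Type*} [Ring A] [Ring B]
    [AddCommGroup P] [Module A P] [Module Bᵐᵒᵖ P] [SMulCommClass A Bᵐᵒᵖ P]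
    [AddCommGroup Q] [Module B Q] [Module Aᵐᵒᵖ Q] [SMulCommClass B Aᵐᵒᵖ Q]
    (μ : Bal A Q P →+ B)
    (hμl : ∀ (b : B) (y : Bal A Q P), μ (b • y) = b * μ y)
    (hμr : ∀ (b : B) (y : Bal A Q P), μ (op b • y) = μ y * b)
    (n : ℕ) (p' : Fin n → P)
    (k : ℕ) (pj : Fin k → P) (qj : Fin k → Q)
    (adj3 : ∀ q : Q, ∑ j, μ (Bal.tmul A q (pj j)) • qj j = q)
    (adj4 : ∀ p : P, ∑ j, op (μ (Bal.tmul A (qj j) p)) • pj j = p)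
    :
    ∀ mul : Bal B P Q → Bal B P Q → Bal B P Q,
      (∀ x y z : Bal B P Q, mul (x + y) z = mul x z + mul y z) →
      (∀ x y z : Bal B P Q, mul x (y + z) = mul x y + mul x z) →
      (∀ (p p' : P) (q q'' : Q),
        mul (Bal.tmul B p q) (Bal.tmul B p' q'')
          = Bal.tmul B (op (μ (Bal.tmul A q p')) • p) q'') →
      (Function.Bijective (endMap μ hμl hμr) ∧
       (∀ x y : Bal B P Q,
         endMap μ hμl hμr (mul x y) = endMap μ hμl hμr x * endMap μ hμl hμr y) ∧
       endMap μ hμl hμr (∑ j, Bal.tmul B (pj j) (qj j)) = 1 ∧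
       (∀ α : Module.End Bᵐᵒᵖ P,
         endMap μ hμl hμr (∑ j, Bal.tmul B (α (pj j)) (qj j)) = α)) := by
  intro mul hl hr hmul
  let mulHom : Bal B P Q →+ Bal B P Q →+ Bal B P Q :=
    AddMonoidHom.mk' (fun x => AddMonoidHom.mk' (mul x) (hr x)) fun x y =>
      AddMonoidHom.ext (hl x y)
  have hinv (α : Module.End Bᵐᵒᵖ P) :
      endMap μ hμl hμr (∑ j, Bal.tmul B (α (pj j)) (qj j)) = α := by
    rw [← endMapInv_apply, endMap_endMapInv μ hμl hμr pj qj adj4]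
  refine ⟨Function.bijective_iff_has_inverse.2 ⟨endMapInv pj qj,
      endMapInv_endMap μ hμl hμr pj qj adj3, endMap_endMapInv μ hμl hμr pj qj adj4⟩,
    endMap_mul μ hμl hμr mulHom hmul, hinv 1, hinv⟩

/-- For symmetric separably equivalent rings with context `(P,Q,ν,μ)`,
the map `p ⊗ q ↦ (p' ↦ p·μ(q ⊗ p'))` is a ring isomorphism from `P ⊗[B] Q` with the
`μ`-multiplication (and identity `Σⱼ pⱼ ⊗ qⱼ`) onto `End(P_B)`, with inverse
`α ↦ Σⱼ α(pⱼ) ⊗ qⱼ`. -/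
theorem endMap_ring_isomorphism
    {A B P Q : Type*} [Ring A] [Ring B]
    [AddCommGroup P] [Module A P] [Module Bᵐᵒᵖ P] [SMulCommClass A Bᵐᵒᵖ P]
    [AddCommGroup Q] [Module B Q] [Module Aᵐᵒᵖ Q] [SMulCommClass B Aᵐᵒᵖ Q]
    [Module.Finite A P] [Module.Projective A P]
    [Module.Finite Bᵐᵒᵖ P] [Module.Projective Bᵐᵒᵖ P]
    [Module.Finite B Q] [Module.Projective B Q]
    [Module.Finite Aᵐᵒᵖ Q] [Module.Projective Aᵐᵒᵖ Q]
    (ν : Bal B P Q →+ A)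
    (hνl : ∀ (a : A) (x : Bal B P Q), ν (a • x) = a * ν x)
    (hνr : ∀ (a : A) (x : Bal B P Q), ν (op a • x) = ν x * a)
    (hνsurj : Function.Surjective ν)
    (hνsplit : ∃ σ : A →+ Bal B P Q,
      (∀ (a c : A), σ (a * c) = a • σ c) ∧ (∀ (a c : A), σ (c * a) = op a • σ c) ∧
      ∀ a : A, ν (σ a) = a)
    (μ : Bal A Q P →+ B)
    (hμl : ∀ (b : B) (y : Bal A Q P), μ (b • y) = b * μ y)
    (hμr : ∀ (b : B) (y : Bal A Q P), μ (op b • y) = μ y * b)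
    (hμsurj : Function.Surjective μ)
    (hμsplit : ∃ τ : B →+ Bal A Q P,
      (∀ (b c : B), τ (b * c) = b • τ c) ∧ (∀ (b c : B), τ (c * b) = op b • τ c) ∧
      ∀ b : B, μ (τ b) = b)
    (n : ℕ) (q' : Fin n → Q) (p' : Fin n → P)
    (adj1 : ∀ p : P, ∑ i, ν (Bal.tmul B p (q' i)) • p' i = p)
    (adj2 : ∀ q : Q, ∑ i, op (ν (Bal.tmul B (p' i) q)) • q' i = q)
    (k : ℕ) (pj : Fin k → P) (qj : Fin k → Q)
    (adj3 : ∀ q : Q, ∑ j, μ (Bal.tmul A q (pj j)) • qj j = q)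
    (adj4 : ∀ p : P, ∑ j, op (μ (Bal.tmul A (qj j) p)) • pj j = p)
    :
    ∀ mul : Bal B P Q → Bal B P Q → Bal B P Q,
      (∀ x y z : Bal B P Q, mul (x + y) z = mul x z + mul y z) →
      (∀ x y z : Bal B P Q, mul x (y + z) = mul x y + mul x z) →
      (∀ (p p' : P) (q q'' : Q),
        mul (Bal.tmul B p q) (Bal.tmul B p' q'')
          = Bal.tmul B (op (μ (Bal.tmul A q p')) • p) q'') →
      (Function.Bijective (endMap μ hμl hμr) ∧
       (∀ x y : Bal B P Q,
         endMap μ hμl hμr (mul x y) = endMap μ hμl hμr x * endMap μ hμl hμr y) ∧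
       endMap μ hμl hμr (∑ j, Bal.tmul B (pj j) (qj j)) = 1 ∧
       (∀ α : Module.End Bᵐᵒᵖ P,
         endMap μ hμl hμr (∑ j, Bal.tmul B (α (pj j)) (qj j)) = α)) :=
  endMap_ring_isomorphism_general μ hμl hμr n p' k pj qj adj3 adj4
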